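/- (Inversion for ∨) If Γ, ∇ⁿ(A ∨ B) ⇒ Δ is provable in iK_d with height at most h, then both Γ, ∇ⁿA ⇒ Δ and Γ, ∇ⁿB ⇒ Δ are provable with height at most h. -/
import Mathlib


inductive Formula where
  | atom : ℕ → Formula
  | top : Formula
  | bot : Formula
  | and : Formula → Formula → Formula
  | or : Formula → Formula → Formula
  | himp : Formula → Formula → Formula
  | imp : Formula → Formula → Formula
  | nabla : Formula → Formula

/-- `nIter n A` is `∇ⁿ A`. -/
def nIter (n : ℕ) (A : Formula) : Formula := Formula.nabla^[n] A

/-- The G3-style cut-free sequent calculus `iK_d`, indexed by an upper bound on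
the height of the proof-tree. -/
inductive iKd : ℕ → Multiset Formula → Option Formula → Prop where
  | idp (h : ℕ) (p : ℕ) : iKd h {Formula.atom p} (some (Formula.atom p))
  | lbot (h : ℕ) : iKd h {Formula.bot} none
  | rtop (h : ℕ) : iKd h 0 (some Formula.top)
  | lw {h : ℕ} {Γ : Multiset Formula} {Δ : Option Formula} (Sig : Multiset Formula) :
      iKd h Γ Δ → iKd (h + 1) (Γ + Sig) Δ
  | rw {h : ℕ} {Γ : Multiset Formula} (A : Formula) :
      iKd h Γ none → iKd (h + 1) Γ (some A)
  | landn {h : ℕ} {Γ : Multiset Formula} {Δ : Option Formula} (n : ℕ) (A B : Formula) :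
      iKd h (nIter n A ::ₘ nIter n B ::ₘ Γ) Δ →
      iKd (h + 1) (nIter n (Formula.and A B) ::ₘ Γ) Δ
  | rand {h : ℕ} {Γ : Multiset Formula} {A B : Formula} :
      iKd h Γ (some A) → iKd h Γ (some B) → iKd (h + 1) Γ (some (Formula.and A B))
  | lorn {h : ℕ} {Γ : Multiset Formula} {Δ : Option Formula} (n : ℕ) (A B : Formula) :
      iKd h (nIter n A ::ₘ Γ) Δ → iKd h (nIter n B ::ₘ Γ) Δ →
      iKd (h + 1) (nIter n (Formula.or A B) ::ₘ Γ) Δ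
  | ror1 {h : ℕ} {Γ : Multiset Formula} {A : Formula} (B : Formula) :
      iKd h Γ (some A) → iKd (h + 1) Γ (some (Formula.or A B))
  | ror2 {h : ℕ} {Γ : Multiset Formula} {B : Formula} (A : Formula) :
      iKd h Γ (some B) → iKd (h + 1) Γ (some (Formula.or A B))
  | limpn {h : ℕ} {Γ : Multiset Formula} {Δ : Option Formula} (n : ℕ) (A B : Formula) :
      iKd h (nIter (n + 1) (Formula.imp A B) ::ₘ Γ) (some (nIter n A)) →
      iKd h (nIter n B ::ₘ nIter (n + 1) (Formula.imp A B) ::ₘ Γ) Δ →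
      iKd (h + 1) (nIter (n + 1) (Formula.imp A B) ::ₘ Γ) Δ
  | rimp {h : ℕ} {Γ : Multiset Formula} {A B : Formula} :
      iKd h (A ::ₘ Γ.map Formula.nabla) (some B) →
      iKd (h + 1) Γ (some (Formula.imp A B))
  | lhimpn {h : ℕ} {Γ : Multiset Formula} {Δ : Option Formula} (n : ℕ) (A B : Formula) :
      iKd h (nIter n (Formula.himp A B) ::ₘ Γ) (some (nIter n A)) →
      iKd h (nIter n B ::ₘ Γ) Δ →
      iKd (h + 1) (nIter n (Formula.himp A B) ::ₘ Γ) Δ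
  | rhimp {h : ℕ} {Γ : Multiset Formula} {A B : Formula} :
      iKd h (A ::ₘ Γ) (some B) → iKd (h + 1) Γ (some (Formula.himp A B))
  | nrule {h : ℕ} {Γ : Multiset Formula} {Δ : Option Formula} :
      iKd h Γ Δ → iKd (h + 1) (Γ.map Formula.nabla) (Δ.map Formula.nabla)

/-- Provability in `iK_d`: provable with some height. -/
def iKdProvable (Γ : Multiset Formula) (Δ : Option Formula) : Prop := ∃ h, iKd h Γ Δ

section Helpers

deriving instance DecidableEq for Formula

lemma nIter_zero (A : Formula) : nIter 0 A = A := rfl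

lemma nIter_succ' (n : ℕ) (A : Formula) : nIter (n+1) A = Formula.nabla (nIter n A) :=
  Function.iterate_succ_apply' _ _ _

lemma nIter_eq_nIter {X Y : Formula} (hX : ∀ Z, X ≠ Formula.nabla Z)
    (hY : ∀ Z, Y ≠ Formula.nabla Z) :
    ∀ {n m : ℕ}, nIter n X = nIter m Y → n = m ∧ X = Y := by
  intro n
  induction n with
  | zero =>
    intro m h
    cases m with
    | zero => exact ⟨rfl, h⟩
    | succ m => rw [nIter_zero, nIter_succ'] at h; exact absurd h (hX _)
  | succ n ih =>
    intro m h
    cases m with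
    | zero => rw [nIter_succ', nIter_zero] at h; exact absurd h.symm (hY _)
    | succ m =>
      rw [nIter_succ', nIter_succ'] at h
      injection h with h
      obtain ⟨e1, e2⟩ := ih h
      exact ⟨by rw [e1], e2⟩

lemma or_not_nabla (A B : Formula) : ∀ Z, Formula.or A B ≠ Formula.nabla Z := by
  intro Z h; cases h

lemma nIter_or_ne_atom (n : ℕ) (A B p) : nIter n (Formula.or A B) ≠ Formula.atom p := by
  cases n with
  | zero => rw [nIter_zero]; intro h; cases h
  | succ n => rw [nIter_succ']; intro h; cases h

lemma nIter_or_ne_bot (n : ℕ) (A B) : nIter n (Formula.or A B) ≠ Formula.bot := by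
  cases n with
  | zero => rw [nIter_zero]; intro h; cases h
  | succ n => rw [nIter_succ']; intro h; cases h

lemma nIter_or_ne_and (n m : ℕ) (A B A' B') :
    nIter n (Formula.or A B) ≠ nIter m (Formula.and A' B') := fun h =>
  by cases (nIter_eq_nIter (or_not_nabla A B) (fun Z h => by cases h) h).2

lemma nIter_or_ne_imp (n m : ℕ) (A B A' B') :
    nIter n (Formula.or A B) ≠ nIter m (Formula.imp A' B') := fun h =>
  by cases (nIter_eq_nIter (or_not_nabla A B) (fun Z h => by cases h) h).2

lemma nIter_or_ne_himp (n m : ℕ) (A B A' B') :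
    nIter n (Formula.or A B) ≠ nIter m (Formula.himp A' B') := fun h =>
  by cases (nIter_eq_nIter (or_not_nabla A B) (fun Z h => by cases h) h).2

lemma nIter_or_eq_or {n m : ℕ} {A B A' B' : Formula}
    (h : nIter n (Formula.or A B) = nIter m (Formula.or A' B')) :
    n = m ∧ A = A' ∧ B = B' := by
  obtain ⟨e1, e2⟩ := nIter_eq_nIter (or_not_nabla A B) (or_not_nabla A' B') h
  injection e2 with h1 h2
  exact ⟨e1, h1, h2⟩

lemma perm3 {α : Type*} (a b c : α) (s : Multiset α) :
    a ::ₘ b ::ₘ c ::ₘ s = c ::ₘ a ::ₘ b ::ₘ s := by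
  rw [Multiset.cons_swap b c, Multiset.cons_swap a c]

lemma iKd_succ {h : ℕ} {Γ : Multiset Formula} {Δ : Option Formula} (H : iKd h Γ Δ) :
    iKd (h+1) Γ Δ := by
  induction H with
  | idp h p => exact .idp _ p
  | lbot h => exact .lbot _
  | rtop h => exact .rtop _
  | lw Sig _ ih => exact .lw Sig ih
  | rw A _ ih => exact .rw A ih
  | landn m A B _ ih => exact .landn m A B ih
  | rand _ _ ih1 ih2 => exact .rand ih1 ih2
  | lorn m A B _ _ ih1 ih2 => exact .lorn m A B ih1 ih2
  | ror1 B _ ih => exact .ror1 B ih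
  | ror2 A _ ih => exact .ror2 A ih
  | limpn m A B _ _ ih1 ih2 => exact .limpn m A B ih1 ih2
  | rimp _ ih => exact .rimp ih
  | lhimpn m A B _ _ ih1 ih2 => exact .lhimpn m A B ih1 ih2
  | rhimp _ ih => exact .rhimp ih
  | nrule _ ih => exact .nrule ih

lemma iKd_mono {h h' : ℕ} {Γ : Multiset Formula} {Δ : Option Formula}
    (hh : h ≤ h') (H : iKd h Γ Δ) : iKd h' Γ Δ := by
  induction h', hh using Nat.le_induction with
  | base => exact H
  | succ _ _ ih => exact iKd_succ ih

lemma iKd_or_aux (A B : Formula) :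
    ∀ {h : ℕ} {Γ' : Multiset Formula} {Δ : Option Formula}, iKd h Γ' Δ →
    ∀ (n : ℕ) (Γ : Multiset Formula), Γ' = nIter n (Formula.or A B) ::ₘ Γ →
    iKd h (nIter n A ::ₘ Γ) Δ ∧ iKd h (nIter n B ::ₘ Γ) Δ := by
  intro h Γ' Δ H
  induction H with
  | idp h p =>
    intro n Γ hEq
    obtain ⟨h1, -⟩ := (Multiset.singleton_eq_cons_iff _).1 hEq
    exact absurd h1.symm (nIter_or_ne_atom n A B p)
  | lbot h =>
    intro n Γ hEq
    obtain ⟨h1, -⟩ := (Multiset.singleton_eq_cons_iff _).1 hEq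
    exact absurd h1.symm (nIter_or_ne_bot n A B)
  | rtop h =>
    intro n Γ hEq
    exact absurd hEq.symm (Multiset.cons_ne_zero)
  | @lw h Γ₀ Δ₀ Sig prem ih =>
    intro n Γ hEq
    have hmem : nIter n (Formula.or A B) ∈ Γ₀ + Sig := by
      rw [hEq]; exact Multiset.mem_cons_self _ _
    rcases Multiset.mem_add.1 hmem with hm | hm
    · have hΓ₀ : nIter n (Formula.or A B) ::ₘ Γ₀.erase _ = Γ₀ := Multiset.cons_erase hm
      have hΓ : Γ = Γ₀.erase (nIter n (Formula.or A B)) + Sig := by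
        have : nIter n (Formula.or A B) ::ₘ (Γ₀.erase (nIter n (Formula.or A B)) + Sig)
            = nIter n (Formula.or A B) ::ₘ Γ := by
          rw [← Multiset.cons_add, hΓ₀, hEq]
        exact ((Multiset.cons_inj_right _).1 this).symm
      obtain ⟨p1, p2⟩ := ih n _ hΓ₀.symm
      subst hΓ
      exact ⟨by rw [← Multiset.cons_add]; exact .lw Sig p1,
             by rw [← Multiset.cons_add]; exact .lw Sig p2⟩
    · have hSig : nIter n (Formula.or A B) ::ₘ Sig.erase _ = Sig := Multiset.cons_erase hm
      have hΓ : Γ = Γ₀ + Sig.erase (nIter n (Formula.or A B)) := by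
        have : nIter n (Formula.or A B) ::ₘ (Γ₀ + Sig.erase (nIter n (Formula.or A B)))
            = nIter n (Formula.or A B) ::ₘ Γ := by
          rw [← Multiset.add_cons, hSig, hEq]
        exact ((Multiset.cons_inj_right _).1 this).symm
      subst hΓ
      exact ⟨by rw [← Multiset.add_cons]; exact .lw _ prem,
             by rw [← Multiset.add_cons]; exact .lw _ prem⟩
  | rw C _ ih =>
    intro n Γ hEq
    obtain ⟨p1, p2⟩ := ih n Γ hEq
    exact ⟨.rw C p1, .rw C p2⟩
  | @landn h Γ₀ Δ₀ m A' B' prem ih =>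
    intro n Γ hEq
    rcases Multiset.cons_eq_cons.1 hEq with ⟨heq, -⟩ | ⟨-, cs, hΓ₀, hΓ⟩
    · exact absurd heq.symm (nIter_or_ne_and n m A B A' B')
    · obtain ⟨p1, p2⟩ := ih n (nIter m A' ::ₘ nIter m B' ::ₘ cs)
        (by rw [hΓ₀, perm3])
      subst hΓ
      constructor
      · rw [Multiset.cons_swap]
        exact .landn m A' B' (by rw [perm3]; exact p1)
      · rw [Multiset.cons_swap]
        exact .landn m A' B' (by rw [perm3]; exact p2)
  | rand _ _ ih1 ih2 =>
    intro n Γ hEq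
    obtain ⟨p1, p2⟩ := ih1 n Γ hEq
    obtain ⟨q1, q2⟩ := ih2 n Γ hEq
    exact ⟨.rand p1 q1, .rand p2 q2⟩
  | @lorn h Γ₀ Δ₀ m A' B' prem1 prem2 ih1 ih2 =>
    intro n Γ hEq
    rcases Multiset.cons_eq_cons.1 hEq with ⟨heq, hctx⟩ | ⟨-, cs, hΓ₀, hΓ⟩
    · obtain ⟨e1, e2, e3⟩ := nIter_or_eq_or heq.symm
      subst e1; subst e2; subst e3; subst hctx
      exact ⟨iKd_succ prem1, iKd_succ prem2⟩
    · obtain ⟨p1, p2⟩ := ih1 n (nIter m A' ::ₘ cs) (by rw [hΓ₀, Multiset.cons_swap])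
      obtain ⟨q1, q2⟩ := ih2 n (nIter m B' ::ₘ cs) (by rw [hΓ₀, Multiset.cons_swap])
      subst hΓ
      constructor
      · rw [Multiset.cons_swap]
        exact .lorn m A' B' (by rw [Multiset.cons_swap]; exact p1)
          (by rw [Multiset.cons_swap]; exact q1)
      · rw [Multiset.cons_swap]
        exact .lorn m A' B' (by rw [Multiset.cons_swap]; exact p2)
          (by rw [Multiset.cons_swap]; exact q2)
  | ror1 C _ ih =>
    intro n Γ hEq
    obtain ⟨p1, p2⟩ := ih n Γ hEq
    exact ⟨.ror1 C p1, .ror1 C p2⟩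
  | ror2 C _ ih =>
    intro n Γ hEq
    obtain ⟨p1, p2⟩ := ih n Γ hEq
    exact ⟨.ror2 C p1, .ror2 C p2⟩
  | @limpn h Γ₀ Δ₀ m A' B' prem1 prem2 ih1 ih2 =>
    intro n Γ hEq
    rcases Multiset.cons_eq_cons.1 hEq with ⟨heq, -⟩ | ⟨-, cs, hΓ₀, hΓ⟩
    · exact absurd heq.symm (nIter_or_ne_imp n (m+1) A B A' B')
    · obtain ⟨p1, p2⟩ := ih1 n (nIter (m+1) (Formula.imp A' B') ::ₘ cs)
        (by rw [hΓ₀, Multiset.cons_swap])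
      obtain ⟨q1, q2⟩ := ih2 n (nIter m B' ::ₘ nIter (m+1) (Formula.imp A' B') ::ₘ cs)
        (by rw [hΓ₀, perm3])
      subst hΓ
      constructor
      · rw [Multiset.cons_swap]
        exact .limpn m A' B' (by rw [Multiset.cons_swap]; exact p1)
          (by rw [perm3]; exact q1)
      · rw [Multiset.cons_swap]
        exact .limpn m A' B' (by rw [Multiset.cons_swap]; exact p2)
          (by rw [perm3]; exact q2)
  | @rimp h Γ₀ A' B' prem ih =>
    intro n Γ hEq
    subst hEq
    have hctx : A' ::ₘ Multiset.map Formula.nabla (nIter n (Formula.or A B) ::ₘ Γ)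
        = nIter (n+1) (Formula.or A B) ::ₘ (A' ::ₘ Γ.map Formula.nabla) := by
      rw [Multiset.map_cons, Multiset.cons_swap, nIter_succ']
    obtain ⟨p1, p2⟩ := ih (n+1) (A' ::ₘ Γ.map Formula.nabla) hctx
    constructor
    · refine .rimp ?_
      rw [Multiset.map_cons, Multiset.cons_swap, ← nIter_succ']
      exact p1
    · refine .rimp ?_
      rw [Multiset.map_cons, Multiset.cons_swap, ← nIter_succ']
      exact p2
  | @lhimpn h Γ₀ Δ₀ m A' B' prem1 prem2 ih1 ih2 =>
    intro n Γ hEq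
    rcases Multiset.cons_eq_cons.1 hEq with ⟨heq, -⟩ | ⟨-, cs, hΓ₀, hΓ⟩
    · exact absurd heq.symm (nIter_or_ne_himp n m A B A' B')
    · obtain ⟨p1, p2⟩ := ih1 n (nIter m (Formula.himp A' B') ::ₘ cs)
        (by rw [hΓ₀, Multiset.cons_swap])
      obtain ⟨q1, q2⟩ := ih2 n (nIter m B' ::ₘ cs) (by rw [hΓ₀, Multiset.cons_swap])
      subst hΓ
      constructor
      · rw [Multiset.cons_swap]
        exact .lhimpn m A' B' (by rw [Multiset.cons_swap]; exact p1)
          (by rw [Multiset.cons_swap]; exact q1)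
      · rw [Multiset.cons_swap]
        exact .lhimpn m A' B' (by rw [Multiset.cons_swap]; exact p2)
          (by rw [Multiset.cons_swap]; exact q2)
  | @rhimp h Γ₀ A' B' prem ih =>
    intro n Γ hEq
    subst hEq
    obtain ⟨p1, p2⟩ := ih n (A' ::ₘ Γ) (Multiset.cons_swap _ _ _)
    constructor
    · exact .rhimp (by rw [Multiset.cons_swap]; exact p1)
    · exact .rhimp (by rw [Multiset.cons_swap]; exact p2)
  | @nrule h Γ₀ Δ₀ prem ih =>
    intro n Γ hEq
    haveI : DecidableEq Formula := Classical.decEq _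
    obtain ⟨b, hb, hfb, herase⟩ := (Multiset.map_eq_cons _ _ _ _).2 hEq
    cases n with
    | zero => rw [nIter_zero] at hfb; cases hfb
    | succ k =>
      rw [nIter_succ'] at hfb
      injection hfb with hfb
      have hΓ₀ : Γ₀ = nIter k (Formula.or A B) ::ₘ Γ₀.erase b := by
        rw [← hfb]; exact (Multiset.cons_erase hb).symm
      obtain ⟨p1, p2⟩ := ih k (Γ₀.erase b) hΓ₀
      subst herase
      constructor
      · have := iKd.nrule p1
        rwa [Multiset.map_cons, ← nIter_succ'] at this
      · have := iKd.nrule p2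
        rwa [Multiset.map_cons, ← nIter_succ'] at this

end Helpers

/-- Height-preserving inversion for `∨`. -/
theorem iKd_inversion_or (h n : ℕ) (Γ : Multiset Formula) (Δ : Option Formula)
    (A B : Formula) (H : iKd h (nIter n (Formula.or A B) ::ₘ Γ) Δ) :
    iKd h (nIter n A ::ₘ Γ) Δ ∧ iKd h (nIter n B ::ₘ Γ) Δ :=
  iKd_or_aux A B H n Γ rfl
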